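/- arXiv:2504.07026 — 7 statements merged into one kernel-verified Lean document; each statement's English description precedes it below -/
import Mathlib

section
/- Let d be a square-free integer with d ≡ 15 (mod 60) such that the equation x² - d·y² = -6 is solvable in integers. Then d ≡ 15 (mod 360). -/
theorem stmt_5 (d : ℤ) (hsf : Squarefree d) (hd : d % 60 = 15)
    (hsol : ∃ x y : ℤ, x ^ 2 - d * y ^ 2 = -6) :
    d % 360 = 15 := by
  obtain ⟨x, y, h⟩ := hsol
  -- mod 8
  have h8 : d % 8 = 7 := by
    have h8' : d % 8 = 3 ∨ d % 8 = 7 := by omega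
    rcases h8' with h3 | h7
    · exfalso
      have hc := congrArg (Int.cast : ℤ → ZMod 8) h
      have hdq : d = 8 * (d / 8) + 3 := by omega
      rw [hdq] at hc
      push_cast at hc
      have key : ∀ a b c : ZMod 8, a ^ 2 - (8 * c + 3) * b ^ 2 ≠ -6 := by decide
      exact key _ _ _ hc
    · exact h7
  -- mod 9
  have h9 : d % 9 = 6 := by
    have h9' : d % 9 = 0 ∨ d % 9 = 3 ∨ d % 9 = 6 := by omega
    rcases h9' with h0 | h3 | h6
    · exfalso
      have h9d : (9 : ℤ) ∣ d := Int.dvd_of_emod_eq_zero h0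
      have : IsUnit (3 : ℤ) := hsf 3 (by norm_num at h9d ⊢; exact h9d)
      rw [Int.isUnit_iff] at this
      omega
    · exfalso
      have hc := congrArg (Int.cast : ℤ → ZMod 9) h
      have hdq : d = 9 * (d / 9) + 3 := by omega
      rw [hdq] at hc
      push_cast at hc
      have key : ∀ a b c : ZMod 9, a ^ 2 - (9 * c + 3) * b ^ 2 ≠ -6 := by decide
      exact key _ _ _ hc
    · exact h6
  omega
end

section
/- Let d ≡ 15 (mod 60) be square-free such that x² - d·y² = -6 is solvable in integers. Then there exists an integer solution (γ', δ') of x² - d·y² = 1 with δ' odd and γ' ≡ ±4 (mod 6). -/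
theorem stmt_7 (d : ℤ) (hsf : Squarefree d) (hd : d % 60 = 15)
    (hsol : ∃ x y : ℤ, x ^ 2 - d * y ^ 2 = -6) :
    ∃ γ' δ' : ℤ, γ' ^ 2 - d * δ' ^ 2 = 1 ∧ Odd δ' ∧
      ∃ α : ℤ, γ' = 6 * α + 4 ∨ γ' = 6 * α - 4 := by
  obtain ⟨x, y, hxy⟩ := hsol
  have hd12 : d % 12 = 3 := by omega
  have hxy' : x * x - d * (y * y) = -6 := by linear_combination hxy
  have h3 : (x * x - d * (y * y)) % 12 = 6 := by rw [hxy']; decide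
  rw [Int.sub_emod, Int.mul_emod x x, Int.mul_emod d, Int.mul_emod y y, hd12] at h3
  obtain ⟨r, hr1, hr2, hrx⟩ : ∃ r, 0 ≤ r ∧ r < 12 ∧ x % 12 = r :=
    ⟨x % 12, Int.emod_nonneg _ (by norm_num), Int.emod_lt_of_pos _ (by norm_num), rfl⟩
  obtain ⟨s, hs1, hs2, hsy⟩ : ∃ s, 0 ≤ s ∧ s < 12 ∧ y % 12 = s :=
    ⟨y % 12, Int.emod_nonneg _ (by norm_num), Int.emod_lt_of_pos _ (by norm_num), rfl⟩
  rw [hrx, hsy] at h3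
  have hx6 : x % 6 = 3 ∧ y % 2 = 1 := by
    interval_cases r <;> interval_cases s <;> omega
  obtain ⟨m, hm⟩ : ∃ m, x = 6 * m + 3 := ⟨(x - 3) / 6, by omega⟩
  obtain ⟨n, hn⟩ : ∃ n, y = 2 * n + 1 := ⟨(y - 1) / 2, by omega⟩
  subst hm hn
  refine ⟨12 * m ^ 2 + 12 * m + 4, (2 * m + 1) * (2 * n + 1),
    by linear_combination (2 * m + 1) ^ 2 * hxy,
    ⟨2 * m * n + m + n, by ring⟩,
    2 * m ^ 2 + 2 * m, Or.inl (by ring)⟩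
end

section
/- Let d ≡ 15 (mod 60) be square-free such that x² - d·y² = -6 is solvable in integers. Then there is no solution (x, y) of x² - d·y² = 1 in integers with x odd and y even that generates (as powers, up to sign) all solutions; more precisely, any fundamental solution (γ, δ) of x² - d·y² = 1 has γ even and δ odd. -/
/-!
Write a solution of `a² - d b² = -6` as `a = 3c` (as `3 ∣ d`); then `(3c² + 1)² - d (cb)² = 1`,
and `a`, hence `c`, is odd, so this solution of the Pell equation has even `x`. On the other hand
the units `≡ 1 (mod 2)` of `ℤ√d` form a subgroup, so if `γ + δ√d ≡ 1 (mod 2)`, every `±(γ + δ√d)ⁿ`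
has odd rational part. Since `d` is odd, `γ + δ√d ≢ 1 (mod 2)` means `γ` even and `δ` odd.
-/

/-- `s = γ + δ√d` is a fundamental solution of `x² - d y² = 1`: `γ, δ` are positive,
`s` is a solution, and every integer solution `(x, y)` satisfies
`x + y√d = ± sⁿ` for some `n : ℤ` (where `s` is viewed as a unit of `ℤ√d`). -/
def IsFundamentalSolution (d γ δ : ℤ) : Prop :=
  0 < γ ∧ 0 < δ ∧ γ ^ 2 - d * δ ^ 2 = 1 ∧
  ∃ u : (ℤ√d)ˣ, (u : ℤ√d) = ⟨γ, δ⟩ ∧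
    ∀ x y : ℤ, x ^ 2 - d * y ^ 2 = 1 →
      ∃ n : ℤ, (⟨x, y⟩ : ℤ√d) = ((u ^ n : (ℤ√d)ˣ) : ℤ√d) ∨
        (⟨x, y⟩ : ℤ√d) = -((u ^ n : (ℤ√d)ˣ) : ℤ√d)

theorem Units.val_zpow_sub_one_mem {R : Type*} [CommRing R] {I : Ideal R} {u : Rˣ}
    (hu : (u : R) - 1 ∈ I) (n : ℤ) : ((u ^ n : Rˣ) : R) - 1 ∈ I := by
  let f : Rˣ →* (R ⧸ I)ˣ := Units.map (Ideal.Quotient.mk I : R →* R ⧸ I)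
  have hf : f u = 1 := Units.ext (Ideal.Quotient.eq.mpr hu)
  have hfn : f (u ^ n) = 1 := by rw [map_zpow, hf, one_zpow]
  exact Ideal.Quotient.eq.mp (congrArg Units.val hfn)

namespace Zsqrtd

variable {d : ℤ}

theorem two_dvd_sub_one_iff {z : ℤ√d} : (2 : ℤ√d) ∣ z - 1 ↔ Odd z.re ∧ Even z.im := by
  rw [← Int.cast_two, intCast_dvd, re_sub, im_sub, re_one, im_one, sub_zero,
    ← even_iff_two_dvd, ← even_iff_two_dvd, Int.even_sub_one, Int.not_even_iff_odd]

theorem odd_re_of_eq_zpow_or_eq_neg_zpow {u : (ℤ√d)ˣ}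
    (hu : Odd (u : ℤ√d).re ∧ Even (u : ℤ√d).im) {z : ℤ√d} {n : ℤ}
    (hz : z = ((u ^ n : (ℤ√d)ˣ) : ℤ√d) ∨ z = -((u ^ n : (ℤ√d)ˣ) : ℤ√d)) : Odd z.re := by
  have hn : Odd ((u ^ n : (ℤ√d)ˣ) : ℤ√d).re :=
    (two_dvd_sub_one_iff.mp <| Ideal.mem_span_singleton.mp <|
      Units.val_zpow_sub_one_mem (Ideal.mem_span_singleton.mpr (two_dvd_sub_one_iff.mpr hu)) n).1
  rcases hz with rfl | rfl
  · exact hn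
  · simpa only [re_neg, odd_neg] using hn

end Zsqrtd

theorem Int.odd_of_sq_sub_mul_sq_eq_neg_six {d a b : ℤ} (hd : Odd d)
    (h : a ^ 2 - d * b ^ 2 = -6) : Odd a := by
  rw [← Int.not_even_iff_odd]
  rintro ⟨k, rfl⟩
  have hb : Even b := by
    have he : Even (d * b ^ 2) := ⟨2 * k ^ 2 + 3, by linear_combination -h⟩
    simpa [Int.even_mul, Int.even_pow, Int.not_even_iff_odd.mpr hd] using he
  obtain ⟨m, rfl⟩ := hb
  have : 4 * (k ^ 2 - d * m ^ 2) = -6 := by linear_combination h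
  omega

theorem Int.exists_pell_even_of_sq_sub_mul_sq_eq_neg_six {d a b : ℤ} (hd2 : Odd d)
    (hd3 : 3 ∣ d) (h : a ^ 2 - d * b ^ 2 = -6) :
    ∃ x y : ℤ, x ^ 2 - d * y ^ 2 = 1 ∧ Even x := by
  have ha := Int.odd_of_sq_sub_mul_sq_eq_neg_six hd2 h
  obtain ⟨e, rfl⟩ := hd3
  obtain ⟨c, rfl⟩ : (3 : ℤ) ∣ a :=
    Int.prime_three.dvd_of_dvd_pow (n := 2) ⟨e * b ^ 2 - 2, by linear_combination h⟩
  have hc : Odd c := (Int.odd_mul.mp ha).2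
  refine ⟨3 * c ^ 2 + 1, c * b, by linear_combination c ^ 2 * h, ?_⟩
  exact ((by decide : Odd (3 : ℤ)).mul hc.pow).add_one

theorem Int.even_iff_odd_of_sq_sub_mul_sq_eq_one {d x y : ℤ} (hd : Odd d)
    (h : x ^ 2 - d * y ^ 2 = 1) : Even x ↔ Odd y := by
  have hodd : ¬ Even (x ^ 2 - d * y ^ 2) := by rw [h]; decide
  simp only [Int.even_sub, Int.even_mul, Int.even_pow, Int.not_even_iff_odd.mpr hd,
    false_or, ne_eq, OfNat.ofNat_ne_zero, not_false_eq_true, and_true] at hodd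
  rw [← Int.not_even_iff_odd]
  tauto

theorem stmt_8_general (d : ℤ) (hd : d % 60 = 15)
    (hsol : ∃ x y : ℤ, x ^ 2 - d * y ^ 2 = -6)
    (γ δ : ℤ) (hfund : IsFundamentalSolution d γ δ) :
    Even γ ∧ Odd δ := by
  obtain ⟨-, -, hnorm, u, hu, hall⟩ := hfund
  have hd2 : Odd d := Int.odd_iff.mpr (by omega)
  obtain ⟨a, b, hab⟩ := hsol
  obtain ⟨x, y, hxy, hx⟩ :=
    Int.exists_pell_even_of_sq_sub_mul_sq_eq_neg_six hd2 (by omega) hab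
  have hγ : Even γ := by
    by_contra hγ
    have hδ : Even δ := by
      rw [← Int.not_odd_iff_even, ← Int.even_iff_odd_of_sq_sub_mul_sq_eq_one hd2 hnorm]
      exact hγ
    obtain ⟨n, hn⟩ := hall x y hxy
    have hx' := Zsqrtd.odd_re_of_eq_zpow_or_eq_neg_zpow
      (hu ▸ ⟨Int.not_even_iff_odd.mp hγ, hδ⟩) hn
    exact Int.not_even_iff_odd.mpr hx' hx
  exact ⟨hγ, (Int.even_iff_odd_of_sq_sub_mul_sq_eq_one hd2 hnorm).mp hγ⟩

theorem stmt_8 (d : ℤ) (hsf : Squarefree d) (hd : d % 60 = 15)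
    (hsol : ∃ x y : ℤ, x ^ 2 - d * y ^ 2 = -6)
    (γ δ : ℤ) (hfund : IsFundamentalSolution d γ δ) :
    Even γ ∧ Odd δ :=
  stmt_8_general d hd hsol γ δ hfund
end

section
/- Let a₁, a₂, b₁, b₂, c₁, c₂, d₁, d₂, e₁ be integers with a₁·a₂·b₁ ≠ 0. Then the system a₁x² + b₁y² + c₁x + d₁y + e₁ = 0, a₂xy + b₂x + c₂y + d₂ = 0 has at most finitely many integer solutions (x, y). -/
open Polynomial in
lemma root_finite4' (A B C D E : ℤ) (hA : A ≠ 0) :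
    {x : ℤ | A*x^4 + B*x^3 + C*x^2 + D*x + E = 0}.Finite := by
  have hp : (Polynomial.C A * X^4 + Polynomial.C B * X^3 + Polynomial.C C * X^2
      + Polynomial.C D * X + Polynomial.C E : ℤ[X]) ≠ 0 := by
    intro hcontra
    have h4 := congrArg (fun p => Polynomial.coeff p 4) hcontra
    simp only [Polynomial.coeff_add, Polynomial.coeff_C_mul, Polynomial.coeff_X_pow,
      Polynomial.coeff_C, Polynomial.coeff_X, Polynomial.coeff_zero] at h4
    norm_num at h4
    exact hA h4
  apply (Polynomial.finite_setOf_isRoot hp).subset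
  intro x hx
  simp only [Set.mem_setOf_eq, Polynomial.IsRoot, Polynomial.eval_add, Polynomial.eval_mul,
    Polynomial.eval_pow, Polynomial.eval_C, Polynomial.eval_X]
  exact hx

open Polynomial in
lemma root_finite2' (A B C : ℤ) (hA : A ≠ 0) :
    {x : ℤ | A*x^2 + B*x + C = 0}.Finite := by
  have hp : (Polynomial.C A * X^2 + Polynomial.C B * X + Polynomial.C C : ℤ[X]) ≠ 0 := by
    intro hcontra
    have h2 := congrArg (fun p => Polynomial.coeff p 2) hcontra
    simp only [Polynomial.coeff_add, Polynomial.coeff_C_mul, Polynomial.coeff_X_pow,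
      Polynomial.coeff_C, Polynomial.coeff_X, Polynomial.coeff_zero] at h2
    norm_num at h2
    exact hA h2
  apply (Polynomial.finite_setOf_isRoot hp).subset
  intro x hx
  simp only [Set.mem_setOf_eq, Polynomial.IsRoot, Polynomial.eval_add, Polynomial.eval_mul,
    Polynomial.eval_pow, Polynomial.eval_C, Polynomial.eval_X]
  exact hx

theorem stmt_14 (a₁ a₂ b₁ b₂ c₁ c₂ d₁ d₂ e₁ : ℤ) (h : a₁ * a₂ * b₁ ≠ 0) :
    {p : ℤ × ℤ |
        a₁ * p.1 ^ 2 + b₁ * p.2 ^ 2 + c₁ * p.1 + d₁ * p.2 + e₁ = 0 ∧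
        a₂ * p.1 * p.2 + b₂ * p.1 + c₂ * p.2 + d₂ = 0}.Finite := by
  have ha₁ : a₁ ≠ 0 := fun hh => h (by simp [hh])
  have ha₂ : a₂ ≠ 0 := fun hh => h (by simp [hh])
  have hb₁ : b₁ ≠ 0 := fun hh => h (by simp [hh])
  -- set of possible x values
  set Xs : Set ℤ := {x | a₂ * x + c₂ = 0} ∪
    {x | (a₁*a₂^2)*x^4 + (2*a₁*a₂*c₂ + c₁*a₂^2)*x^3
      + (a₁*c₂^2 + 2*c₁*a₂*c₂ + e₁*a₂^2 + b₁*b₂^2 - d₁*b₂*a₂)*x^2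
      + (c₁*c₂^2 + 2*e₁*a₂*c₂ + 2*b₁*b₂*d₂ - d₁*(b₂*c₂ + d₂*a₂))*x
      + (e₁*c₂^2 + b₁*d₂^2 - d₁*d₂*c₂) = 0} with hXs
  have hXfin : Xs.Finite := by
    apply Set.Finite.union
    · apply Set.Subsingleton.finite
      intro u hu v hv
      have : a₂ * u = a₂ * v := by
        simp only [Set.mem_setOf_eq] at hu hv; linarith
      exact mul_left_cancel₀ ha₂ this
    · exact root_finite4' _ _ _ _ _ (by positivity)
  have key : {p : ℤ × ℤ |
        a₁ * p.1 ^ 2 + b₁ * p.2 ^ 2 + c₁ * p.1 + d₁ * p.2 + e₁ = 0 ∧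
        a₂ * p.1 * p.2 + b₂ * p.1 + c₂ * p.2 + d₂ = 0} ⊆
      ⋃ x ∈ Xs, ({x} : Set ℤ) ×ˢ {y : ℤ | b₁*y^2 + d₁*y + (a₁*x^2 + c₁*x + e₁) = 0} := by
    rintro ⟨x, y⟩ ⟨h1, h2⟩
    simp only [Set.mem_setOf_eq] at h1 h2
    have hx : x ∈ Xs := by
      by_cases ht : a₂ * x + c₂ = 0
      · exact Set.mem_union_left _ ht
      · apply Set.mem_union_right
        simp only [Set.mem_setOf_eq]
        linear_combination (a₂*x + c₂)^2 * h1 +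
          (b₁*((b₂*x + d₂) - y*(a₂*x + c₂)) - d₁*(a₂*x + c₂)) * h2
    refine Set.mem_biUnion hx ?_
    constructor
    · rfl
    · simp only [Set.mem_setOf_eq]
      linarith
  apply Set.Finite.subset _ key
  apply Set.Finite.biUnion hXfin
  intro x _
  exact (Set.finite_singleton x).prod (root_finite2' _ _ _ hb₁)
end

section
/- Let d ≡ 15 (mod 60) be square-free, let m, k be integers with (2m+1)² - d·(2k)² = 1, and suppose x₁, y₁, x₂, y₂ are integers with (x₁ + y₁√d)² - (x₂ + y₂√d)² = (4m+2) + 4k√d in Z[√d]. Then y₁ and y₂ have different parity and x₁ and x₂ have different parity. -/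
lemma sq_zmod4 (x : ℤ) : ((x : ZMod 4))^2 = 0 ∨ ((x : ZMod 4))^2 = 1 := by
  rcases Int.even_or_odd x with ⟨a, ha⟩ | ⟨a, ha⟩
  · left
    calc ((x : ZMod 4))^2 = 4 * (a : ZMod 4)^2 := by rw [ha]; push_cast; ring
    _ = 0 := by rw [show (4 : ZMod 4) = 0 by decide]; ring
  · right
    calc ((x : ZMod 4))^2 = 4 * ((a : ZMod 4)^2 + a) + 1 := by rw [ha]; push_cast; ring
    _ = 1 := by rw [show (4 : ZMod 4) = 0 by decide]; ring

lemma even_sum_sq_eq (x y : ℤ) (he : Even (x + y)) :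
    ((x : ZMod 4))^2 = ((y : ZMod 4))^2 := by
  have h1 : Even (x - y) := by
    rcases he with ⟨c, hc⟩
    exact ⟨c - y, by omega⟩
  rcases he with ⟨c, hc⟩
  rcases h1 with ⟨e, hee⟩
  have hdvd : (4:ℤ) ∣ x^2 - y^2 :=
    ⟨c * e, by linear_combination (x - y) * hc + 2 * c * hee⟩
  have := (ZMod.intCast_zmod_eq_zero_iff_dvd (x^2 - y^2) 4).mpr hdvd
  push_cast at this
  linear_combination this

theorem stmt_15 (d : ℤ) (hsf : Squarefree d) (hd : d % 60 = 15)
    (m k x₁ y₁ x₂ y₂ : ℤ)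
    (hmk : (2 * m + 1) ^ 2 - d * (2 * k) ^ 2 = 1)
    (h : (⟨x₁, y₁⟩ : ℤ√d) ^ 2 - (⟨x₂, y₂⟩ : ℤ√d) ^ 2 = ⟨4 * m + 2, 4 * k⟩) :
    Odd (y₁ + y₂) ∧ Odd (x₁ + x₂) := by
  have h1 : x₁*x₁ + d*y₁*y₁ - (x₂*x₂ + d*y₂*y₂) = 4*m + 2 := by
    have := congrArg Zsqrtd.re h
    simpa [pow_two, Zsqrtd.re_mul] using this
  have h40 : (4 : ZMod 4) = 0 := by decide
  have hd4 : (d : ZMod 4) = 3 := by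
    have : ((d : ℤ) : ZMod 4) = ((3 : ℤ) : ZMod 4) := by
      rw [ZMod.intCast_eq_intCast_iff]
      unfold Int.ModEq
      omega
    simpa using this
  have hc : ((x₁ : ZMod 4))^2 + 3*((y₁:ZMod 4))^2 - ((x₂:ZMod 4))^2 - 3*((y₂:ZMod 4))^2 = 2 := by
    have := congrArg (fun z : ℤ => ((z : ZMod 4))) h1
    push_cast at this
    rw [hd4] at this
    linear_combination this + (m : ZMod 4) * h40
  constructor
  · rw [← Int.not_even_iff_odd]
    intro he
    have hy := even_sum_sq_eq y₁ y₂ he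
    rw [hy] at hc
    rcases sq_zmod4 x₁ with h1' | h1' <;> rcases sq_zmod4 x₂ with h2' | h2' <;>
      rw [h1', h2'] at hc <;>
      first
        | exact absurd (show (0:ZMod 4) = 2 by linear_combination hc) (by decide)
        | exact absurd (show (3:ZMod 4) = 2 by linear_combination hc) (by decide)
        | exact absurd (show (1:ZMod 4) = 2 by linear_combination hc) (by decide)
        | exact absurd (show (0:ZMod 4) = 2 by linear_combination hc + h40) (by decide)
        | exact absurd (show (3:ZMod 4) = 2 by linear_combination hc + h40) (by decide)
        | exact absurd (show (1:ZMod 4) = 2 by linear_combination hc + h40) (by decide)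
        | exact absurd (show (0:ZMod 4) = 2 by linear_combination hc - h40) (by decide)
        | exact absurd (show (3:ZMod 4) = 2 by linear_combination hc - h40) (by decide)
        | exact absurd (show (1:ZMod 4) = 2 by linear_combination hc - h40) (by decide)
  · rw [← Int.not_even_iff_odd]
    intro he
    have hx := even_sum_sq_eq x₁ x₂ he
    rw [hx] at hc
    rcases sq_zmod4 y₁ with h1' | h1' <;> rcases sq_zmod4 y₂ with h2' | h2' <;>
      rw [h1', h2'] at hc <;>
      first
        | exact absurd (show (0:ZMod 4) = 2 by linear_combination hc) (by decide)
        | exact absurd (show (3:ZMod 4) = 2 by linear_combination hc) (by decide)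
        | exact absurd (show (1:ZMod 4) = 2 by linear_combination hc) (by decide)
        | exact absurd (show (0:ZMod 4) = 2 by linear_combination hc + h40) (by decide)
        | exact absurd (show (3:ZMod 4) = 2 by linear_combination hc + h40) (by decide)
        | exact absurd (show (1:ZMod 4) = 2 by linear_combination hc + h40) (by decide)
        | exact absurd (show (0:ZMod 4) = 2 by linear_combination hc - h40) (by decide)
        | exact absurd (show (3:ZMod 4) = 2 by linear_combination hc - h40) (by decide)
        | exact absurd (show (1:ZMod 4) = 2 by linear_combination hc - h40) (by decide)
end

section
/- Let d ≡ 15 (mod 60) be square-free such that x² - d·y² = -6 is solvable in integers, and let m, k be integers with (2m+1)² - d·(2k)² = 1. Then n = (4m+2) + 4k√d cannot be written as a difference of two squares in Z[√d]; i.e., there are no x₁, y₁, x₂, y₂ ∈ Z with (x₁ + y₁√d)² - (x₂ + y₂√d)² = (4m+2) + 4k√d. -/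
lemma sq_mod5 (a : ℤ) : a ^ 2 % 5 = 0 ∨ a ^ 2 % 5 = 1 ∨ a ^ 2 % 5 = 4 := by
  have h2 : a ^ 2 % 5 = (a % 5) * (a % 5) % 5 := by rw [pow_two, Int.mul_emod]
  have h : a % 5 = 0 ∨ a % 5 = 1 ∨ a % 5 = 2 ∨ a % 5 = 3 ∨ a % 5 = 4 := by omega
  rcases h with h | h | h | h | h <;> rw [h2, h] <;> decide

lemma unit_cases (A B : ℤ) (hAB : A * B = 4)
    (hA5 : A % 5 = 0 ∨ A % 5 = 1 ∨ A % 5 = 4)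
    (hB5 : B % 5 = 0 ∨ B % 5 = 1 ∨ B % 5 = 4) :
    A = 1 ∨ A = -1 ∨ B = 1 ∨ B = -1 := by
  have hAd : A ∣ 4 := ⟨B, hAB.symm⟩
  have h1 : A ≤ 4 := Int.le_of_dvd (by norm_num) hAd
  have h2 : -4 ≤ A := by
    have := Int.le_of_dvd (by norm_num : (0:ℤ) < 4) ((neg_dvd).mpr hAd)
    linarith
  interval_cases A <;> omega

lemma key (d m k a b c e x₂ y₂ : ℤ)
    (hA : a ^ 2 - d * b ^ 2 = 1 ∨ a ^ 2 - d * b ^ 2 = -1)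
    (hre : a * c + d * (b * e) = 4 * m + 2)
    (him : a * e + b * c = 4 * k)
    (hac : a - c = 2 * x₂) (hbe : b - e = 2 * y₂) : False := by
  have h1 : (a ^ 2 - d * b ^ 2) * c = 2 * (a * (2 * m + 1) - 2 * (d * b * k)) := by
    linear_combination a * hre - d * b * him
  have h2 : (a ^ 2 - d * b ^ 2) * e = 2 * (2 * a * k - b * (2 * m + 1)) := by
    linear_combination a * him - b * hre
  have hc : ∃ c', c = 2 * c' := by
    rcases hA with hA | hA <;> rw [hA] at h1
    · exact ⟨a * (2 * m + 1) - 2 * (d * b * k), by linarith⟩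
    · exact ⟨-(a * (2 * m + 1) - 2 * (d * b * k)), by linarith⟩
  have he : ∃ e', e = 2 * e' := by
    rcases hA with hA | hA <;> rw [hA] at h2
    · exact ⟨2 * a * k - b * (2 * m + 1), by linarith⟩
    · exact ⟨-(2 * a * k - b * (2 * m + 1)), by linarith⟩
  obtain ⟨c', rfl⟩ := hc
  obtain ⟨e', rfl⟩ := he
  have ha : a = 2 * (c' + x₂) := by omega
  have hb : b = 2 * (e' + y₂) := by omega
  have h4 : a ^ 2 - d * b ^ 2 = 4 * ((c' + x₂) ^ 2 - d * (e' + y₂) ^ 2) := by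
    rw [ha, hb]; ring
  set Z := (c' + x₂) ^ 2 - d * (e' + y₂) ^ 2 with hZ
  rw [h4] at hA
  omega

theorem stmt_16 (d : ℤ) (hsf : Squarefree d) (hd : d % 60 = 15)
    (hsol : ∃ x y : ℤ, x ^ 2 - d * y ^ 2 = -6)
    (m k : ℤ) (hmk : (2 * m + 1) ^ 2 - d * (2 * k) ^ 2 = 1) :
    ¬ ∃ x₁ y₁ x₂ y₂ : ℤ,
      (⟨x₁, y₁⟩ : ℤ√d) ^ 2 - (⟨x₂, y₂⟩ : ℤ√d) ^ 2 = ⟨4 * m + 2, 4 * k⟩ := by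
  rintro ⟨x₁, y₁, x₂, y₂, h⟩
  have hre0 := congrArg Zsqrtd.re h
  have him0 := congrArg Zsqrtd.im h
  simp only [pow_two, Zsqrtd.re_sub, Zsqrtd.im_sub, Zsqrtd.re_mul, Zsqrtd.im_mul] at hre0 him0
  -- components of the factorization α = s + t, β = s - t
  have hre : (x₁ + x₂) * (x₁ - x₂) + d * ((y₁ + y₂) * (y₁ - y₂)) = 4 * m + 2 := by
    linear_combination hre0
  have him : (x₁ + x₂) * (y₁ - y₂) + (y₁ + y₂) * (x₁ - x₂) = 4 * k := by
    linear_combination him0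
  have hAB : ((x₁ + x₂) ^ 2 - d * (y₁ + y₂) ^ 2) * ((x₁ - x₂) ^ 2 - d * (y₁ - y₂) ^ 2) = 4 := by
    linear_combination
      ((x₁ + x₂) * (x₁ - x₂) + d * ((y₁ + y₂) * (y₁ - y₂)) + 4 * m + 2) * hre
      - d * ((x₁ + x₂) * (y₁ - y₂) + (y₁ + y₂) * (x₁ - x₂) + 4 * k) * him
      + 4 * hmk
  -- 5 ∣ d, so norms are squares mod 5
  obtain ⟨d', rfl⟩ : (5:ℤ) ∣ d := by omega
  have hA5 : ((x₁ + x₂) ^ 2 - 5 * d' * (y₁ + y₂) ^ 2) % 5 = (x₁ + x₂) ^ 2 % 5 := by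
    have hE : (x₁ + x₂) ^ 2 - 5 * d' * (y₁ + y₂) ^ 2
        = (x₁ + x₂) ^ 2 + 5 * (-(d' * (y₁ + y₂) ^ 2)) := by ring
    rw [hE, Int.add_mul_emod_self_left]
  have hB5 : ((x₁ - x₂) ^ 2 - 5 * d' * (y₁ - y₂) ^ 2) % 5 = (x₁ - x₂) ^ 2 % 5 := by
    have hE : (x₁ - x₂) ^ 2 - 5 * d' * (y₁ - y₂) ^ 2
        = (x₁ - x₂) ^ 2 + 5 * (-(d' * (y₁ - y₂) ^ 2)) := by ring
    rw [hE, Int.add_mul_emod_self_left]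
  have hcase := unit_cases _ _ hAB
    (by rw [hA5]; exact sq_mod5 _) (by rw [hB5]; exact sq_mod5 _)
  rcases hcase with hc | hc | hc | hc
  · exact key (5 * d') m k (x₁ + x₂) (y₁ + y₂) (x₁ - x₂) (y₁ - y₂) x₂ y₂
      (Or.inl hc) hre him (by ring) (by ring)
  · exact key (5 * d') m k (x₁ + x₂) (y₁ + y₂) (x₁ - x₂) (y₁ - y₂) x₂ y₂
      (Or.inr hc) hre him (by ring) (by ring)
  · exact key (5 * d') m k (x₁ - x₂) (y₁ - y₂) (x₁ + x₂) (y₁ + y₂) (-x₂) (-y₂)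
      (Or.inl hc) (by linear_combination hre) (by linear_combination him) (by ring) (by ring)
  · exact key (5 * d') m k (x₁ - x₂) (y₁ - y₂) (x₁ + x₂) (y₁ + y₂) (-x₂) (-y₂)
      (Or.inr hc) (by linear_combination hre) (by linear_combination him) (by ring) (by ring)
end

section
/- The element 2 cannot be written as a difference of two squares in Z[√15]: there are no x₁, y₁, x₂, y₂ ∈ Z with (x₁ + y₁√15)² - (x₂ + y₂√15)² = 2. -/
lemma sq5 (a : ℤ) : a^2 % 5 = 0 ∨ a^2 % 5 = 1 ∨ a^2 % 5 = 4 := by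
  have key : a^2 % 5 = (a % 5 * (a % 5)) % 5 := by rw [sq, Int.mul_emod]
  have h2 : a % 5 = 0 ∨ a % 5 = 1 ∨ a % 5 = 2 ∨ a % 5 = 3 ∨ a % 5 = 4 := by omega
  rcases h2 with h|h|h|h|h <;> rw [key, h] <;> decide

lemma mod5 (A B n : ℤ) (hA : A % 5 = 0 ∨ A % 5 = 1 ∨ A % 5 = 4)
    (h : A - 15*B = n) (hn : n = 2 ∨ n = -2) : False := by omega

lemma even_contra (a b n : ℤ) (ha : 2 ∣ a) (hb : 2 ∣ b)
    (h : a^2 - 15*b^2 = n) : 4 ∣ n := by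
  obtain ⟨a', rfl⟩ := ha; obtain ⟨b', rfl⟩ := hb
  exact ⟨a'^2 - 15*b'^2, by linear_combination -h⟩

theorem stmt_19 :
    ¬ ∃ x₁ y₁ x₂ y₂ : ℤ,
      (⟨x₁, y₁⟩ : ℤ√15) ^ 2 - (⟨x₂, y₂⟩ : ℤ√15) ^ 2 = 2 := by
  rintro ⟨x₁, y₁, x₂, y₂, h⟩
  rw [Zsqrtd.ext_iff] at h
  simp [pow_two, Zsqrtd.re_mul, Zsqrtd.im_mul, Zsqrtd.re_sub, Zsqrtd.im_sub] at h
  obtain ⟨h1, h2⟩ := h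
  set a := x₁ - x₂ with ha
  set b := y₁ - y₂ with hb
  set c := x₁ + x₂ with hc
  set d := y₁ + y₂ with hd
  have hA : a*c + 15*(b*d) = 2 := by simp [ha, hb, hc, hd]; ring_nf; linarith
  have hB : a*d + b*c = 0 := by simp [ha, hb, hc, hd]; ring_nf; linarith
  obtain ⟨n1, hn1⟩ : ∃ n, a^2 - 15*b^2 = n := ⟨_, rfl⟩
  obtain ⟨n2, hn2⟩ : ∃ n, c^2 - 15*d^2 = n := ⟨_, rfl⟩
  have hN : n1 * n2 = 4 := by
    rw [← hn1, ← hn2]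
    linear_combination (a*c + 15*(b*d) + 2)*hA - 15*(a*d + b*c)*hB
  have hCa : n1 * c = 2*a := by rw [← hn1]; linear_combination a*hA - 15*b*hB
  have hCd : n1 * d = -2*b := by rw [← hn1]; linear_combination (-b)*hA + a*hB
  have hCc : n2 * a = 2*c := by rw [← hn2]; linear_combination c*hA - 15*d*hB
  have hCb : n2 * b = -2*d := by rw [← hn2]; linear_combination (-d)*hA + c*hB
  have hdvd : n1 ∣ 4 := ⟨n2, hN.symm⟩
  have habs : |n1| ≤ 4 := Int.le_of_dvd (by norm_num) ((abs_dvd _ _).mpr hdvd)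
  have h0 : n1 ≠ 0 := by rintro rfl; simp at hN
  have h3 : n1 ≠ 3 := by rintro rfl; omega
  have h3' : n1 ≠ -3 := by rintro rfl; omega
  have hbd := abs_le.mp habs
  have hlist : n1 = -4 ∨ n1 = -2 ∨ n1 = -1 ∨ n1 = 1 ∨ n1 = 2 ∨ n1 = 4 := by omega
  rcases hlist with rfl|rfl|rfl|rfl|rfl|rfl
  · have hv : n2 = -1 := by omega
    subst hv
    have h2c : 2 ∣ c := by omega
    have h2d : 2 ∣ d := by omega
    have := even_contra c d (-1) h2c h2d hn2
    omega
  · exact mod5 (a^2) (b^2) (-2) (sq5 a) hn1 (Or.inr rfl)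
  · have h2a : 2 ∣ a := by omega
    have h2b : 2 ∣ b := by omega
    have := even_contra a b (-1) h2a h2b hn1
    omega
  · have h2a : 2 ∣ a := by omega
    have h2b : 2 ∣ b := by omega
    have := even_contra a b 1 h2a h2b hn1
    omega
  · exact mod5 (a^2) (b^2) 2 (sq5 a) hn1 (Or.inl rfl)
  · have hv : n2 = 1 := by omega
    subst hv
    have h2c : 2 ∣ c := by omega
    have h2d : 2 ∣ d := by omega
    have := even_contra c d 1 h2c h2d hn2
    omega
end
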